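/- arXiv:1609.06961 — 3 statements merged into one kernel-verified Lean document; each statement's English description precedes it below -/
import Mathlib

section
/- If a graph G without isolated vertices has a perfect matching every edge of which is a strong clique, then G is well-covered with α(G) = |V(G)|/2 (i.e., G is very well-covered). -/
/-!
Let `p` be the involution sending each vertex to its partner in the perfect matching. Every
matching edge `{v, p v}` is a strong clique, so a maximal independent set `S` contains at least
one of `v`, `p v`, and being independent it cannot contain both. Hence `p` maps `S` bijectively
onto its complement and `2 |S| = |V|` for every maximal independent set `S`; in particular for a
maximum one, whose size is `α(G)`.
-/

variable {V : Type*} [Fintype V] [DecidableEq V]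

/-- `S` is an independent set in `G`. -/
def IsIndep (G : SimpleGraph V) (S : Finset V) : Prop :=
  ∀ ⦃u⦄, u ∈ S → ∀ ⦃v⦄, v ∈ S → ¬ G.Adj u v

/-- `S` is a maximal independent set in `G`. -/
def MaxIndep (G : SimpleGraph V) (S : Finset V) : Prop :=
  IsIndep G S ∧ ∀ T, IsIndep G T → S ⊆ T → T = S

/-- `C` is a strong clique in `G`: a clique meeting every maximal independent set. -/
def IsStrongClique (G : SimpleGraph V) (C : Finset V) : Prop :=
  G.IsClique ↑C ∧ ∀ S, MaxIndep G S → (C ∩ S).Nonempty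

/-- `G` is localizable: its vertex set partitions into strong cliques. -/
def Localizable (G : SimpleGraph V) : Prop :=
  ∃ (k : ℕ) (C : Fin k → Finset V), (∀ j, IsStrongClique G (C j)) ∧ ∀ v, ∃! j, v ∈ C j

/-- The independence number `α(G)`. -/
noncomputable def alpha (G : SimpleGraph V) : ℕ :=
  sSup {n | ∃ S : Finset V, IsIndep G S ∧ S.card = n}

/-- The independent domination number `i(G)`. -/
noncomputable def indomNum (G : SimpleGraph V) : ℕ :=
  sInf {n | ∃ S : Finset V, MaxIndep G S ∧ S.card = n}

/-- The clique cover number `θ(G)`. -/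
noncomputable def theta (G : SimpleGraph V) : ℕ :=
  sInf {n | ∃ C : Fin n → Finset V, (∀ j, G.IsClique ↑(C j)) ∧ ∀ v, ∃! j, v ∈ C j}

/-- `G` is well-covered: all maximal independent sets have the same size. -/
def WellCovered (G : SimpleGraph V) : Prop :=
  ∀ S T, MaxIndep G S → MaxIndep G T → S.card = T.card

namespace SimpleGraph.Subgraph.IsPerfectMatching

variable {W : Type*} {G : SimpleGraph W} {M : G.Subgraph}

noncomputable def partner (hM : M.IsPerfectMatching) (v : W) : W :=
  (isPerfectMatching_iff.mp hM v).choose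

lemma adj_partner (hM : M.IsPerfectMatching) (v : W) : M.Adj v (hM.partner v) :=
  (isPerfectMatching_iff.mp hM v).choose_spec.1

lemma partner_involutive (hM : M.IsPerfectMatching) : Function.Involutive hM.partner :=
  fun v => hM.1.eq_of_adj_left (hM.adj_partner _) (hM.adj_partner v).symm

end SimpleGraph.Subgraph.IsPerfectMatching

open Finset

section

variable {W : Type*}

lemma two_mul_card_eq_of_involutive [Fintype W] [DecidableEq W] {f : W → W}
    (hf : Function.Involutive f) {S : Finset W} (hS : ∀ v, v ∉ S ↔ f v ∈ S) :
    2 * #S = Fintype.card W := by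
  have hcompl : Sᶜ = S.image f := by
    ext v
    rw [mem_compl, hS, mem_image]
    exact ⟨fun h => ⟨f v, h, hf v⟩, fun ⟨u, hu, hv⟩ => hv ▸ (hf u).symm ▸ hu⟩
  have := card_add_card_compl S
  rw [hcompl, card_image_of_injective S hf.injective] at this
  omega

lemma IsStrongClique.notMem_iff_mem [DecidableEq W] {G : SimpleGraph W} {u v : W}
    {S : Finset W} (hC : IsStrongClique G {u, v}) (huv : G.Adj u v) (hS : MaxIndep G S) :
    u ∉ S ↔ v ∈ S := by
  refine ⟨fun hu => ?_, fun hv hu => hS.1 hu hv huv⟩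
  obtain ⟨w, hw⟩ := hC.2 S hS
  rw [mem_inter, mem_insert, mem_singleton] at hw
  obtain ⟨rfl | rfl, hwS⟩ := hw
  · exact absurd hwS hu
  · exact hwS

lemma exists_maxIndep_card_eq_alpha [Fintype W] (G : SimpleGraph W) :
    ∃ S, MaxIndep G S ∧ #S = alpha G := by
  set sizes := {n | ∃ S : Finset W, IsIndep G S ∧ #S = n}
  have hbdd : BddAbove sizes := ⟨Fintype.card W, by rintro _ ⟨S, -, rfl⟩; exact card_le_univ S⟩
  have hne : sizes.Nonempty := ⟨0, ∅, fun u hu => absurd hu (notMem_empty u), rfl⟩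
  obtain ⟨S, hS, hcard⟩ := Nat.sSup_mem hne hbdd
  refine ⟨S, ⟨hS, fun T hT hST => ?_⟩, hcard⟩
  exact (eq_of_subset_of_card_le hST (hcard ▸ le_csSup hbdd ⟨T, hT, rfl⟩)).symm

end

theorem perfectMatching_strong_edges_very_wellCovered_general (G : SimpleGraph V)
    (M : G.Subgraph)
    (hM : M.IsPerfectMatching) (hstrong : ∀ u v, M.Adj u v → IsStrongClique G {u, v}) :
    WellCovered G ∧ 2 * alpha G = Fintype.card V := by
  have hcard : ∀ S, MaxIndep G S → 2 * #S = Fintype.card V := fun S hS =>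
    two_mul_card_eq_of_involutive hM.partner_involutive fun v =>
      (hstrong _ _ (hM.adj_partner v)).notMem_iff_mem (M.adj_sub (hM.adj_partner v)) hS
  obtain ⟨S₀, hS₀, hα⟩ := exists_maxIndep_card_eq_alpha G
  refine ⟨fun S T hS hT => ?_, hα ▸ hcard S₀ hS₀⟩
  have := hcard S hS
  have := hcard T hT
  omega

theorem perfectMatching_strong_edges_very_wellCovered (G : SimpleGraph V)
    (hiso : ∀ v : V, ∃ w, G.Adj v w) (M : G.Subgraph)
    (hM : M.IsPerfectMatching) (hstrong : ∀ u v, M.Adj u v → IsStrongClique G {u, v}) :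
    WellCovered G ∧ 2 * alpha G = Fintype.card V :=
  perfectMatching_strong_edges_very_wellCovered_general G M hM hstrong
end

section
/- A triangle-free graph G without isolated vertices is localizable if and only if G has a perfect matching every edge of which is a strong clique. -/
variable {V : Type*} [Fintype V] [DecidableEq V]

/-!
A maximal independent set through a neighbour of `v` avoids `v` but meets every strong clique,
so a strong clique containing a non-isolated vertex `v` has a second vertex; without triangles
it is then exactly an edge. Hence a partition into strong cliques is a perfect matching by
strong edges, and conversely the edges of such a matching partition the vertex set.
-/

theorem SimpleGraph.IsClique.card_lt_of_cliqueFree {α : Type*} {G : SimpleGraph α}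
    {n : ℕ} {s : Finset α} (hG : G.CliqueFree n) (hs : G.IsClique s) : s.card < n := by
  by_contra! hle
  obtain ⟨t, hts, htn⟩ := Finset.exists_subset_card_eq hle
  exact hG t ⟨hs.subset (by exact_mod_cast hts), htn⟩

omit [DecidableEq V] in
theorem exists_maxIndep_superset {G : SimpleGraph V} {S : Finset V} (hS : IsIndep G S) :
    ∃ T, MaxIndep G T ∧ S ⊆ T := by
  obtain ⟨T, hST, hT⟩ := Finite.exists_le_maximal (p := IsIndep G) hS
  exact ⟨T, ⟨hT.1, fun T' hT' hTT' => le_antisymm (hT.2 hT' hTT') hTT'⟩, hST⟩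

omit [Fintype V] [DecidableEq V] in
theorem isIndep_singleton (G : SimpleGraph V) (u : V) : IsIndep G {u} := by
  intro a ha b hb
  rw [Finset.mem_singleton] at ha hb
  subst ha hb
  exact G.irrefl

theorem IsStrongClique.exists_ne_of_adj {G : SimpleGraph V} {C : Finset V}
    (hC : IsStrongClique G C) {v u : V} (huv : G.Adj v u) : ∃ w ∈ C, w ≠ v := by
  obtain ⟨T, hT, huT⟩ := exists_maxIndep_superset (isIndep_singleton G u)
  obtain ⟨w, hw⟩ := hC.2 T hT
  obtain ⟨hwC, hwT⟩ := Finset.mem_inter.mp hw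
  refine ⟨w, hwC, ?_⟩
  rintro rfl
  exact hT.1 hwT (huT (Finset.mem_singleton_self u)) huv

theorem IsStrongClique.eq_pair_of_cliqueFree_three {G : SimpleGraph V} {C : Finset V}
    (hC : IsStrongClique G C) (htf : G.CliqueFree 3) {v u : V} (hvC : v ∈ C)
    (huv : G.Adj v u) : ∃ w, w ≠ v ∧ C = {v, w} := by
  obtain ⟨w, hwC, hwv⟩ := hC.exists_ne_of_adj huv
  refine ⟨w, hwv, (Finset.eq_of_subset_of_card_le ?_ ?_).symm⟩
  · exact Finset.insert_subset hvC (Finset.singleton_subset_iff.mpr hwC)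
  · rw [Finset.card_pair hwv.symm]
    exact Nat.le_of_lt_succ (hC.1.card_lt_of_cliqueFree htf)

omit [Fintype V] in
theorem localizable_iff_exists_finset {G : SimpleGraph V} :
    Localizable G ↔
      ∃ P : Finset (Finset V), (∀ C ∈ P, IsStrongClique G C) ∧ ∀ v, ∃! C, C ∈ P ∧ v ∈ C := by
  constructor
  · rintro ⟨k, C, hC, hpart⟩
    refine ⟨Finset.univ.image C, by simpa using hC, fun v => ?_⟩
    obtain ⟨j, hvj, hj⟩ := hpart v
    refine ⟨C j, ⟨Finset.mem_image_of_mem C (Finset.mem_univ j), hvj⟩, ?_⟩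
    rintro _ ⟨hD, hvD⟩
    obtain ⟨i, -, rfl⟩ := Finset.mem_image.mp hD
    rw [hj i hvD]
  · rintro ⟨P, hP, hpart⟩
    refine ⟨P.card, fun j => P.equivFin.symm j, fun j => hP _ (P.equivFin.symm j).2, fun v => ?_⟩
    obtain ⟨C, ⟨hC, hvC⟩, huniq⟩ := hpart v
    refine ⟨P.equivFin ⟨C, hC⟩, by simpa using hvC, fun j hvj => ?_⟩
    rw [← Equiv.symm_apply_eq]
    exact Subtype.ext (huniq _ ⟨(P.equivFin.symm j).2, hvj⟩)

theorem Localizable.exists_perfectMatching_of_cliqueFree_three {G : SimpleGraph V}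
    (hG : Localizable G) (htf : G.CliqueFree 3) (hiso : ∀ v : V, ∃ w, G.Adj v w) :
    ∃ M : G.Subgraph, M.IsPerfectMatching ∧ ∀ u v, M.Adj u v → IsStrongClique G {u, v} := by
  obtain ⟨P, hP, hpart⟩ := localizable_iff_exists_finset.mp hG
  have hpair : ∀ v, ∃ w, w ≠ v ∧ {v, w} ∈ P := by
    intro v
    obtain ⟨C, ⟨hC, hvC⟩, -⟩ := hpart v
    obtain ⟨u, hvu⟩ := hiso v
    obtain ⟨w, hwv, rfl⟩ := (hP C hC).eq_pair_of_cliqueFree_three htf hvC hvu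
    exact ⟨w, hwv, hC⟩
  let M : G.Subgraph :=
    { verts := Set.univ
      Adj := fun u v => u ≠ v ∧ {u, v} ∈ P
      adj_sub := fun {u v} huv => (hP _ huv.2).1 (by simp) (by simp) huv.1
      edge_vert := fun _ => trivial
      symm := ⟨fun u v huv => ⟨huv.1.symm, Finset.pair_comm u v ▸ huv.2⟩⟩ }
  refine ⟨M, SimpleGraph.Subgraph.isPerfectMatching_iff.mpr fun v => ?_, fun u v huv => hP _ huv.2⟩
  obtain ⟨w, hwv, hw⟩ := hpair v
  refine ⟨w, ⟨hwv.symm, hw⟩, fun y ⟨hvy, hy⟩ => ?_⟩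
  have hyw : y ∈ ({v, w} : Finset V) :=
    (hpart v).unique ⟨hy, by simp⟩ ⟨hw, by simp⟩ ▸ by simp
  simpa [hvy.symm] using hyw

theorem SimpleGraph.Subgraph.IsPerfectMatching.localizable {G : SimpleGraph V} {M : G.Subgraph}
    (hM : M.IsPerfectMatching) (hstrong : ∀ u v, M.Adj u v → IsStrongClique G {u, v}) :
    Localizable G := by
  classical
  refine localizable_iff_exists_finset.mpr
    ⟨Finset.univ.filter fun C => ∃ u v, M.Adj u v ∧ C = {u, v}, ?_, fun v => ?_⟩
  · intro C hC
    obtain ⟨u, v, huv, rfl⟩ := (Finset.mem_filter.mp hC).2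
    exact hstrong u v huv
  obtain ⟨w, hvw, hw⟩ := SimpleGraph.Subgraph.isPerfectMatching_iff.mp hM v
  refine ⟨{v, w}, ⟨Finset.mem_filter.mpr ⟨Finset.mem_univ _, v, w, hvw, rfl⟩, by simp⟩, ?_⟩
  rintro C ⟨hC, hvC⟩
  obtain ⟨a, b, hab, rfl⟩ := (Finset.mem_filter.mp hC).2
  rcases Finset.mem_insert.mp hvC with rfl | hvb
  · rw [hw b hab]
  · obtain rfl := Finset.mem_singleton.mp hvb
    rw [hw a hab.symm, Finset.pair_comm]

theorem triangleFree_localizable_iff (G : SimpleGraph V)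
    (htf : G.CliqueFree 3) (hiso : ∀ v : V, ∃ w, G.Adj v w) :
    Localizable G ↔
      ∃ M : G.Subgraph, M.IsPerfectMatching ∧
        ∀ u v, M.Adj u v → IsStrongClique G {u, v} :=
  ⟨fun hG => hG.exists_perfectMatching_of_cliqueFree_three htf hiso,
    fun ⟨_, hM, hstrong⟩ => hM.localizable hstrong⟩
end

section
/- Let H be a connected graph not isomorphic to K4 or the diamond. Then any two strong triangles of H are edge-disjoint. -/
variable {V : Type*} [Fintype V] [DecidableEq V]

/-- `M` is a matching in `H`: a set of pairwise disjoint edges. -/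
def IsMatching (H : SimpleGraph V) (M : Set (Sym2 V)) : Prop :=
  M ⊆ H.edgeSet ∧ ∀ e ∈ M, ∀ f ∈ M, e ≠ f → ∀ v : V, ¬ (v ∈ e ∧ v ∈ f)

/-- `M` is a maximal matching in `H`. -/
def IsMaximalMatching (H : SimpleGraph V) (M : Set (Sym2 V)) : Prop :=
  IsMatching H M ∧ ∀ M', IsMatching H M' → M ⊆ M' → M' = M

/-- The matching `M` covers the vertex `v`. -/
def MatchCovers (M : Set (Sym2 V)) (v : V) : Prop := ∃ e ∈ M, v ∈ e

/-- A vertex is strong if it is covered by every maximal matching. -/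
def StrongVertex (H : SimpleGraph V) (u : V) : Prop :=
  ∀ M, IsMaximalMatching H M → MatchCovers M u

/-- The triangle on vertices `a`, `b`, `c` is strong: every maximal matching
contains one of its edges. -/
def StrongTriangle (H : SimpleGraph V) (a b c : V) : Prop :=
  ∀ M, IsMaximalMatching H M → ∃ e ∈ M, e = s(a, b) ∨ e = s(b, c) ∨ e = s(a, c)

/-- The diamond: `K₄` minus one edge. -/
def diamondGraph : SimpleGraph (Fin 4) :=
  (⊤ : SimpleGraph (Fin 4)).deleteEdges {s((0 : Fin 4), (3 : Fin 4))}

/-!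
Let strong triangles `xyz` and `xyw` share the edge `xy`, with `z ≠ w`. The vertices `x, y, z, w`
cannot be all of `H`, since `H` would then be `K₄` or the diamond, so by connectivity some outside
vertex `v` is adjacent to one of them, `u`. Together with an edge of the two triangles avoiding `u`,
the edge `vu` forms a matching that touches every edge of one of the triangles but contains none
of them; any maximal matching extending it then misses that triangle.
-/

section

variable {V : Type*} {H : SimpleGraph V}

lemma IsMatching.exists_isMaximalMatching_superset [Finite V] {M : Set (Sym2 V)}
    (hM : IsMatching H M) :
    ∃ N, IsMaximalMatching H N ∧ M ⊆ N := by
  obtain ⟨N, ⟨hN, hMN⟩, hmax⟩ :=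
    Set.Finite.exists_maximalFor id {N | IsMatching H N ∧ M ⊆ N} (Set.toFinite _) ⟨M, hM, le_rfl⟩
  exact ⟨N, ⟨hN, fun M' hM' hNM' => le_antisymm (hmax ⟨hM', hMN.trans hNM'⟩ hNM') hNM'⟩, hMN⟩

lemma isMatching_pair {p q r t : V} (hpq : H.Adj p q) (hrt : H.Adj r t)
    (hpr : p ≠ r) (hpt : p ≠ t) (hqr : q ≠ r) (hqt : q ≠ t) :
    IsMatching H {s(p, q), s(r, t)} := by
  refine ⟨?_, ?_⟩
  · rintro e (rfl | rfl) <;> simpa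
  · rintro e (rfl | rfl) f (rfl | rfl) hef u ⟨hue, huf⟩ <;>
      simp only [Sym2.mem_iff, ne_eq, not_true_eq_false] at hue huf hef <;> aesop

lemma StrongTriangle.rotate {a b c : V} (h : StrongTriangle H a b c) : StrongTriangle H b c a := by
  intro M hM
  obtain ⟨e, he, rfl | rfl | rfl⟩ := h M hM <;> exact ⟨_, he, by simp [Sym2.eq_swap]⟩

lemma StrongTriangle.swap {a b c : V} (h : StrongTriangle H a b c) : StrongTriangle H b a c := by
  intro M hM
  obtain ⟨e, he, rfl | rfl | rfl⟩ := h M hM <;> exact ⟨_, he, by simp [Sym2.eq_swap]⟩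

lemma not_strongTriangle_of_adj_of_adj [Finite V] {x y z v w : V} (hxy : x ≠ y) (hvx : H.Adj v x)
    (hwy : H.Adj w y) (hvy : v ≠ y) (hvz : v ≠ z) (hwx : w ≠ x) (hwz : w ≠ z) (hvw : v ≠ w) :
    ¬ StrongTriangle H x y z := by
  intro hT
  obtain ⟨N, hN, hsub⟩ :=
    (isMatching_pair hvx hwy hvw hvy hwx.symm hxy).exists_isMaximalMatching_superset
  obtain ⟨e, heN, he⟩ := hT N hN
  have hvxN : s(v, x) ∈ N := hsub (by simp)
  have hwyN : s(w, y) ∈ N := hsub (by simp)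
  have hve : v ∉ e := by rcases he with rfl | rfl | rfl <;> simp [hvx.ne, hvy, hvz]
  have hwe : w ∉ e := by rcases he with rfl | rfl | rfl <;> simp [hwy.ne, hwx, hwz]
  have hx : x ∉ e := fun hx => hN.1.2 e heN _ hvxN
    (ne_of_mem_of_not_mem' (Sym2.mem_mk_left v x) hve).symm x ⟨hx, Sym2.mem_mk_right v x⟩
  have hy : y ∉ e := fun hy => hN.1.2 e heN _ hwyN
    (ne_of_mem_of_not_mem' (Sym2.mem_mk_left w y) hwe).symm y ⟨hy, Sym2.mem_mk_right w y⟩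
  rcases he with rfl | rfl | rfl <;> simp at hx hy

/-- Listing the vertices as `z, x, y, w` puts the possibly missing edge `zw` at `s(0, 3)`, the
missing edge of `diamondGraph`. -/
lemma nonempty_iso_top_or_diamondGraph {x y z w : V} (hxy : H.Adj x y) (hyz : H.Adj y z)
    (hxz : H.Adj x z) (hyw : H.Adj y w) (hxw : H.Adj x w) (hzw : z ≠ w)
    (hV : ∀ u, u ∈ ({x, y, z, w} : Set V)) :
    Nonempty (H ≃g (⊤ : SimpleGraph (Fin 4))) ∨ Nonempty (H ≃g diamondGraph) := by
  have hf : Function.Bijective ![z, x, y, w] := by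
    refine ⟨fun i j hij => ?_, fun u => ?_⟩
    · fin_cases i <;> fin_cases j <;>
        simp_all [hxy.ne, hyz.ne, hxz.ne, hyw.ne, hxw.ne, hxy.ne.symm, hyz.ne.symm, hxz.ne.symm,
          hyw.ne.symm, hxw.ne.symm, hzw.symm]
    · rcases hV u with rfl | rfl | rfl | rfl
      exacts [⟨1, rfl⟩, ⟨2, rfl⟩, ⟨0, rfl⟩, ⟨3, rfl⟩]
  let f := Equiv.ofBijective _ hf
  suffices H.comap f = ⊤ ∨ H.comap f = diamondGraph by
    rcases this with h | h
    exacts [.inl ⟨h ▸ (SimpleGraph.Iso.comap f H).symm⟩,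
      .inr ⟨h ▸ (SimpleGraph.Iso.comap f H).symm⟩]
  by_cases hzw' : H.Adj z w
  · refine .inl (SimpleGraph.ext (funext₂ fun i j => ?_))
    fin_cases i <;> fin_cases j <;> simp [f, hxy, hyz, hxz, hyw, hxw, hzw', hxy.symm, hyz.symm,
      hxz.symm, hyw.symm, hxw.symm, hzw'.symm]
  · refine .inr (SimpleGraph.ext (funext₂ fun i j => ?_))
    fin_cases i <;> fin_cases j <;> simp [f, diamondGraph, hxy, hyz, hxz, hyw, hxw, hzw', hxy.symm,
      hyz.symm, hxz.symm, hyw.symm, hxw.symm, mt SimpleGraph.Adj.symm hzw']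

lemma StrongTriangle.exists_apex {a b c p q : V} (hT : StrongTriangle H a b c) (hab : H.Adj a b)
    (hbc : H.Adj b c) (hac : H.Adj a c)
    (he : s(p, q) ∈ ({s(a, b), s(b, c), s(a, c)} : Set (Sym2 V))) :
    ∃ r, ({a, b, c} : Set V) = {p, q, r} ∧ H.Adj p q ∧ H.Adj q r ∧ H.Adj p r ∧
      StrongTriangle H p q r := by
  simp only [Set.mem_insert_iff, Set.mem_singleton_iff, Sym2.eq_iff] at he
  rcases he with (⟨rfl, rfl⟩ | ⟨rfl, rfl⟩) | (⟨rfl, rfl⟩ | ⟨rfl, rfl⟩) | (⟨rfl, rfl⟩ | ⟨rfl, rfl⟩)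
  · exact ⟨c, rfl, hab, hbc, hac, hT⟩
  · exact ⟨c, Set.insert_comm _ _ _, hab.symm, hac, hbc, hT.swap⟩
  · exact ⟨a, by grind, hbc, hac.symm, hab.symm, hT.rotate⟩
  · exact ⟨a, by grind, hbc.symm, hab.symm, hac.symm, hT.rotate.swap⟩
  · exact ⟨b, by grind, hac, hbc.symm, hab, hT.swap.rotate⟩
  · exact ⟨b, by grind, hac.symm, hab, hbc.symm, hT.rotate.rotate⟩

theorem StrongTriangle.apex_eq [Finite V] (hconn : H.Connected)
    (hK4 : ¬ Nonempty (H ≃g (⊤ : SimpleGraph (Fin 4))))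
    (hdiamond : ¬ Nonempty (H ≃g diamondGraph)) {x y z w : V} (hxy : H.Adj x y)
    (hyz : H.Adj y z) (hxz : H.Adj x z) (hyw : H.Adj y w) (hxw : H.Adj x w)
    (hT : StrongTriangle H x y z) (hT' : StrongTriangle H x y w) : z = w := by
  by_contra hzw
  obtain ⟨t, ht⟩ : ∃ t, t ∉ ({x, y, z, w} : Set V) := by
    by_contra! hV
    rcases nonempty_iso_top_or_diamondGraph hxy hyz hxz hyw hxw hzw hV with h | h
    exacts [hK4 h, hdiamond h]
  obtain ⟨⟨⟨u, v⟩, huv⟩, -, hu, hv⟩ := (hconn x t).some.exists_boundary_dart _ (by simp) ht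
  simp only [Set.mem_insert_iff, Set.mem_singleton_iff, not_or] at hu hv
  obtain ⟨hvx, hvy, hvz, hvw⟩ := hv
  rcases hu with rfl | rfl | rfl | rfl
  · exact not_strongTriangle_of_adj_of_adj hxy.ne huv.symm hyw.symm hvy hvz hxw.ne.symm
      (Ne.symm hzw) hvw hT
  · exact not_strongTriangle_of_adj_of_adj hxy.ne.symm huv.symm hxw.symm hvx hvz hyw.ne.symm
      (Ne.symm hzw) hvw hT.swap
  · exact not_strongTriangle_of_adj_of_adj hyz.ne.symm huv.symm hyw.symm hvy hvx (Ne.symm hzw)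
      hxw.ne.symm hvw hT.rotate.swap
  · exact not_strongTriangle_of_adj_of_adj hyw.ne.symm huv.symm hyz.symm hvy hvx hzw
      hxz.ne.symm hvz hT'.rotate.swap

end

theorem strong_triangles_edge_disjoint (H : SimpleGraph V) (hconn : H.Connected)
    (hK4 : ¬ Nonempty (H ≃g (⊤ : SimpleGraph (Fin 4))))
    (hdiamond : ¬ Nonempty (H ≃g diamondGraph))
    (a b c a' b' c' : V)
    (hab : H.Adj a b) (hbc : H.Adj b c) (hac : H.Adj a c)
    (hab' : H.Adj a' b') (hbc' : H.Adj b' c') (hac' : H.Adj a' c')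
    (hT : StrongTriangle H a b c) (hT' : StrongTriangle H a' b' c')
    (hne : ({a, b, c} : Set V) ≠ {a', b', c'}) :
    ∀ e : Sym2 V, e ∈ ({s(a, b), s(b, c), s(a, c)} : Set (Sym2 V)) →
      e ∉ ({s(a', b'), s(b', c'), s(a', c')} : Set (Sym2 V)) := by
  refine Sym2.ind fun p q he he' => hne ?_
  obtain ⟨r, hs, hpq, hqr, hpr, hpqr⟩ := hT.exists_apex hab hbc hac he
  obtain ⟨r', hs', -, hqr', hpr', hpqr'⟩ := hT'.exists_apex hab' hbc' hac' he'
  rw [hs, hs', hpqr.apex_eq hconn hK4 hdiamond hpq hqr hpr hqr' hpr' hpqr']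
end
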